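/- arXiv:0810.5559 — 5 statements merged into one kernel-verified Lean document; each statement's English description precedes it below -/
import Mathlib

section
/- Let Φ be a regluing of a set 𝒜 of disjoint α-paths in S² into a set ℬ of disjoint β-paths in S². Then the bijective continuous map Φ : S² ∖ Im 𝒜 → S² ∖ Im ℬ is a homeomorphism between these subspaces, i.e. its inverse Φ⁻¹ : S² ∖ Im ℬ → S² ∖ Im 𝒜 is also continuous. -/
open Set Filter Topology OnePoint

noncomputable section

abbrev Sph : Type := Metric.sphere (0 : EuclideanSpace ℝ (Fin 3)) 1

/-- The unit circle in the plane. -/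
def circS : Set (ℝ × ℝ) := {p | p.1 ^ 2 + p.2 ^ 2 = 1}

abbrev OP : Type := OnePoint (ℝ × ℝ)

/-- The closed outside `Δ̄∞` of the unit circle in the one-point compactification of the plane. -/
def deltaBar : Set OP := insert ∞ ((fun p : ℝ × ℝ => (p : OP)) '' {p | 1 ≤ p.1 ^ 2 + p.2 ^ 2})

/-- The unit circle viewed inside the one-point compactification of the plane. -/
def circOP : Set OP := (fun p : ℝ × ℝ => (p : OP)) '' circS

/-- The open outside `Δ∞` of the unit circle. -/
def deltaInf : Set OP := deltaBar \ circOP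

/-- An α-path: `α (t₁,t₂) = α (t₁',t₂')` iff `t₁ = t₁'` and `t₂ = ±t₂'`. -/
def IsAlphaPath (α : ℝ × ℝ → Sph) : Prop :=
  ContinuousOn α circS ∧
    ∀ p ∈ circS, ∀ q ∈ circS, (α p = α q ↔ p.1 = q.1 ∧ (p.2 = q.2 ∨ p.2 = -q.2))

/-- A β-path: `β (t₁,t₂) = β (t₁',t₂')` iff `t₁ = ±t₁'` and `t₂ = t₂'`. -/
def IsBetaPath (β : ℝ × ℝ → Sph) : Prop :=
  ContinuousOn β circS ∧
    ∀ p ∈ circS, ∀ q ∈ circS, (β p = β q ↔ (p.1 = q.1 ∨ p.1 = -q.1) ∧ p.2 = q.2)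

/-- The image of a path (its values on the unit circle). -/
def pathIm (α : ℝ × ℝ → Sph) : Set Sph := α '' circS

/-- `Im 𝒜`: the union of the images of the members of a family of paths. -/
def famIm (A : Set (ℝ × ℝ → Sph)) : Set Sph := ⋃ α ∈ A, pathIm α

/-- A family of paths with pairwise disjoint images. -/
def DisjointPaths (A : Set (ℝ × ℝ → Sph)) : Prop :=
  A.Pairwise fun α α' => Disjoint (pathIm α) (pathIm α')

/-- `ext` is an extension `α̂ : Δ̄∞ → S²` of the α-path `α`: it is continuous on `Δ̄∞`,
restricts to `α` on the unit circle, and maps `Δ∞` homeomorphically onto `S² ∖ α(S¹)`. -/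
def IsExtension (α : ℝ × ℝ → Sph) (ext : OP → Sph) : Prop :=
  ContinuousOn ext deltaBar ∧ (∀ p ∈ circS, ext (p : OP) = α p) ∧
    Topology.IsEmbedding (deltaInf.restrict ext) ∧ ext '' deltaInf = (pathIm α)ᶜ

/-- `Φ` is a regluing of the family `A` of α-paths (with chosen extensions `ext`) into the
family `B` of β-paths, according to the correspondence `b : α ↦ β_α`.  Only the values of `Φ`
on `S² ∖ Im A` matter: `Φ` restricts to a continuous bijection `S² ∖ Im A → S² ∖ Im B`, and
for every `α ∈ A` and `p ∈ S¹`, `Φ (α̂ z)` tends to `β_α p` as `z` tends to `p` within `Δ∞`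
(along the points where `Φ` is defined, i.e. where `α̂ z ∉ Im A`). -/
structure IsRegluing (A : Set (ℝ × ℝ → Sph)) (ext : (ℝ × ℝ → Sph) → OP → Sph)
    (B : Set (ℝ × ℝ → Sph)) (b : (ℝ × ℝ → Sph) → ℝ × ℝ → Sph) (Φ : Sph → Sph) : Prop where
  bijOn : Set.BijOn Φ (famIm A)ᶜ (famIm B)ᶜ
  contOn : ContinuousOn Φ (famIm A)ᶜ
  tendsto : ∀ α ∈ A, ∀ p ∈ circS,
    Filter.Tendsto (fun z => Φ (ext α z))
      (𝓝[deltaInf ∩ ext α ⁻¹' (famIm A)ᶜ] ((p : ℝ × ℝ) : OP)) (𝓝 (b α p))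

/-- The data of a set `A` of disjoint α-paths with chosen extensions `ext`, a set `B` of
disjoint β-paths, and a bijection `b : α ↦ β_α` from `A` to `B`. -/
structure RegluingData (A : Set (ℝ × ℝ → Sph)) (ext : (ℝ × ℝ → Sph) → OP → Sph)
    (B : Set (ℝ × ℝ → Sph)) (b : (ℝ × ℝ → Sph) → ℝ × ℝ → Sph) : Prop where
  alpha : ∀ α ∈ A, IsAlphaPath α
  disjA : DisjointPaths A
  extOk : ∀ α ∈ A, IsExtension α (ext α)
  beta : ∀ β ∈ B, IsBetaPath β
  disjB : DisjointPaths B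
  bij : Set.BijOn b A B

lemma isClosed_deltaBar : IsClosed deltaBar := by
  have ho : IsOpen ((fun p : ℝ × ℝ => (p : OP)) '' {p : ℝ × ℝ | p.1 ^ 2 + p.2 ^ 2 < 1}) :=
    OnePoint.isOpenEmbedding_coe.isOpenMap _
      (isOpen_lt (by continuity) continuous_const)
  have hcompl : deltaBarᶜ = (fun p : ℝ × ℝ => (p : OP)) '' {p : ℝ × ℝ | p.1 ^ 2 + p.2 ^ 2 < 1} := by
    ext z
    induction z using OnePoint.rec with
    | infty =>
      simp [deltaBar, OnePoint.infty_ne_coe]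
    | coe p =>
      simp only [deltaBar, mem_compl_iff, mem_insert_iff, mem_image, mem_setOf_eq]
      constructor
      · intro h
        push_neg at h
        refine ⟨p, ?_, rfl⟩
        by_contra hle
        exact h.2 p (not_lt.1 hle) rfl
      · rintro ⟨q, hq, hqe⟩
        have hqp : q = p := OnePoint.coe_injective hqe
        push_neg
        refine ⟨(OnePoint.coe_ne_infty p), ?_⟩
        rintro r hr hre
        have hrp : r = p := OnePoint.coe_injective hre
        rw [hrp, ← hqp] at hr
        exact absurd hq (not_lt.2 hr)
  rw [← isOpen_compl_iff, hcompl]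
  exact ho

/-- A regluing `Φ : S² ∖ Im 𝒜 → S² ∖ Im ℬ` is a homeomorphism between these
subspaces: it has a continuous inverse `Ψ : S² ∖ Im ℬ → S² ∖ Im 𝒜`. -/
theorem regluing_is_homeomorphism (A B : Set (ℝ × ℝ → Sph))
    (ext : (ℝ × ℝ → Sph) → OP → Sph) (b : (ℝ × ℝ → Sph) → ℝ × ℝ → Sph) (Φ : Sph → Sph)
    (hdata : RegluingData A ext B b) (hreg : IsRegluing A ext B b Φ) :
    ∃ Ψ : Sph → Sph, Set.BijOn Ψ (famIm B)ᶜ (famIm A)ᶜ ∧ ContinuousOn Ψ (famIm B)ᶜ ∧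
      (∀ x ∈ (famIm A)ᶜ, Ψ (Φ x) = x) ∧ (∀ y ∈ (famIm B)ᶜ, Φ (Ψ y) = y) := by
  classical
  haveI : Nonempty Sph := (NormedSpace.sphere_nonempty.2 (by norm_num)).to_subtype
  obtain ⟨hbij, hcont, htend⟩ := hreg
  set S : Set Sph := (famIm B)ᶜ with hSdef
  set T : Set Sph := (famIm A)ᶜ with hTdef
  set Ψ : Sph → Sph := Function.invFunOn Φ T with hΨdef
  have hinv : Set.InvOn Ψ Φ T S := hbij.invOn_invFunOn
  have hΨbij : Set.BijOn Ψ S T := Set.BijOn.symm hinv.symm hbij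
  refine ⟨Ψ, hΨbij, ?_, fun x hx => hinv.1 hx, fun y hy => hinv.2 hy⟩
  intro y hy
  rw [ContinuousWithinAt, Filter.tendsto_iff_ultrafilter]
  intro g hg
  have hgy : ↑g ≤ 𝓝 y := hg.trans nhdsWithin_le_nhds
  have hgS : S ∈ g := hg (self_mem_nhdsWithin)
  -- the pushforward under Ψ lands in T
  have hmapT : ∀ᶠ x in Filter.map Ψ ↑g, x ∈ T := by
    rw [Filter.eventually_map]
    exact Filter.eventually_of_mem hgS fun y' hy' => hΨbij.mapsTo hy'
  obtain ⟨x, -, hx⟩ := isCompact_univ.ultrafilter_le_nhds (g.map Ψ)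
    (by rw [le_principal_iff]; exact univ_mem)
  have hxmap : Filter.map Ψ ↑g ≤ 𝓝 x := hx
  -- Main claim: x ∉ famIm A
  have hxT : x ∈ T := by
    by_contra hxmem
    have hxA : x ∈ famIm A := not_not.1 (by simpa [hTdef] using hxmem)
    simp only [famIm, mem_iUnion, pathIm, mem_image] at hxA
    obtain ⟨α, hαA, p, hp, hαpx⟩ := hxA
    obtain ⟨hce, hrestr, hemb, him⟩ := hdata.extOk α hαA
    -- T ⊆ (pathIm α)ᶜ = ext α '' deltaInf
    have hTsub : ∀ s ∈ T, s ∈ (ext α) '' deltaInf := by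
      intro s hs
      rw [him]
      intro hmem
      exact hs (by
        simp only [famIm, mem_iUnion]
        exact ⟨α, hαA, hmem⟩)
    set u : Sph → OP := Function.invFunOn (ext α) deltaInf with hudef
    have hu1 : ∀ s ∈ T, u s ∈ deltaInf := by
      intro s hs
      obtain ⟨w, hw, hws⟩ := hTsub s hs
      exact Function.invFunOn_mem ⟨w, hw, hws⟩
    have hu2 : ∀ s ∈ T, ext α (u s) = s := by
      intro s hs
      obtain ⟨w, hw, hws⟩ := hTsub s hs
      exact Function.invFunOn_eq ⟨w, hw, hws⟩
    -- new ultrafilter on OP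
    set h : Ultrafilter OP := (g.map Ψ).map u with hhdef
    have hhle : (↑h : Filter OP) ≤ 𝓟 deltaInf := by
      rw [le_principal_iff]
      show u ⁻¹' deltaInf ∈ (g.map Ψ)
      exact Filter.mem_of_superset hmapT fun s hs => hu1 s hs
    obtain ⟨z, -, hz⟩ := isCompact_univ.ultrafilter_le_nhds h
      (by rw [le_principal_iff]; exact univ_mem)
    have hzbar : z ∈ deltaBar := by
      have hcl : z ∈ closure deltaInf := by
        rw [mem_closure_iff_clusterPt]
        exact ClusterPt.mono (ClusterPt.of_le_nhds hz) hhle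
      exact closure_minimal Set.diff_subset isClosed_deltaBar hcl
    -- the images under ext α recover Ψ-values
    have hkey : Filter.map (ext α) ↑h = Filter.map Ψ ↑g := by
      rw [hhdef, Ultrafilter.coe_map, Filter.map_map]
      apply Filter.map_congr
      exact hmapT.mono fun s hs => hu2 s hs
    by_cases hzin : z ∈ deltaInf
    · -- ext α z = x but ext α z ∉ pathIm α while x ∈ pathIm α
      have hcw : Filter.Tendsto (ext α) (↑h) (𝓝 (ext α z)) := by
        have := (hce z (Set.diff_subset hzin)).mono_left
          (show (↑h : Filter OP) ≤ 𝓝[deltaBar] z from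
            le_inf hz (hhle.trans (principal_mono.2 Set.diff_subset)))
        exact this
      have hxz : ext α z = x := by
        have h1 : Filter.map Ψ ↑g ≤ 𝓝 (ext α z) := hkey ▸ hcw
        exact tendsto_nhds_unique (f := id) (l := (g.map Ψ : Filter Sph)) h1 hxmap
      have : ext α z ∈ (pathIm α)ᶜ := him ▸ Set.mem_image_of_mem _ hzin
      exact this (hxz ▸ ⟨p, hp, hαpx⟩)
    · -- z is on the circle; use the regluing tendsto condition
      have hzc : z ∈ circOP := by
        by_contra hzc
        exact hzin ⟨hzbar, hzc⟩
      obtain ⟨q, hq, hqz⟩ := hzc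
      have htq := htend α hαA q hq
      have hhle2 : (↑h : Filter OP) ≤ 𝓟 (deltaInf ∩ ext α ⁻¹' (famIm A)ᶜ) := by
        rw [le_principal_iff]
        show u ⁻¹' _ ∈ (g.map Ψ)
        refine Filter.mem_of_superset hmapT fun s hs => ⟨hu1 s hs, ?_⟩
        show ext α (u s) ∈ (famIm A)ᶜ
        rw [hu2 s hs]; exact hs
      rw [← hqz] at hz
      have hΦtend : Filter.Tendsto (fun w => Φ (ext α w)) ↑h (𝓝 (b α q)) :=
        htq.mono_left (le_inf hz hhle2)
      -- but (fun w => Φ (ext α w)) pushed along h equals g itself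
      have hgq : (↑g : Filter Sph) ≤ 𝓝 (b α q) := by
        have : Filter.map (fun w => Φ (ext α w)) ↑h = Filter.map (fun y' => Φ (Ψ y')) ↑g := by
          rw [hhdef, Ultrafilter.coe_map, Ultrafilter.coe_map, Filter.map_map, Filter.map_map]
          apply Filter.map_congr
          exact (Filter.eventually_of_mem hgS fun y' hy' => hΨbij.mapsTo hy').mono
            (fun y' hy' => by simp only [Function.comp]; rw [hu2 _ hy'])
        have h2 : Filter.map (fun y' => Φ (Ψ y')) ↑g ≤ 𝓝 (b α q) := this ▸ hΦtend
        have h3 : Filter.map (fun y' => Φ (Ψ y')) ↑g = Filter.map id ↑g := by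
          apply Filter.map_congr
          exact Filter.eventually_of_mem hgS fun y' hy' => hinv.2 hy'
        rw [h3, Filter.map_id] at h2
        exact h2
      have hyq : y = b α q := tendsto_nhds_unique (f := id) (l := (↑g : Filter Sph)) hgy hgq
      have : b α q ∈ famIm B := by
        simp only [famIm, mem_iUnion]
        exact ⟨b α, hdata.bij.mapsTo hαA, ⟨q, hq, rfl⟩⟩
      exact hy (hyq ▸ this)
  -- now x ∈ T; conclude x = Ψ y
  have hΦx : Φ x = y := by
    have hc := (hcont x hxT).mono_left
      (show Filter.map Ψ ↑g ≤ 𝓝[T] x from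
        le_inf hxmap (le_principal_iff.2 hmapT))
    have hc' : Filter.map Φ (Filter.map Ψ ↑g) ≤ 𝓝 (Φ x) := hc
    have heq : Filter.map Φ (Filter.map Ψ ↑g) = ↑g := by
      rw [Filter.map_map]
      have : Filter.map (Φ ∘ Ψ) ↑g = Filter.map id ↑g := by
        apply Filter.map_congr
        exact Filter.eventually_of_mem hgS fun y' hy' => hinv.2 hy'
      rw [this, Filter.map_id]
    rw [heq] at hc'
    exact tendsto_nhds_unique (f := id) (l := (↑g : Filter Sph)) hc' hgy
  have hxΨy : x = Ψ y := by
    apply hbij.injOn hxT (hΨbij.mapsTo hy)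
    rw [hΦx, hinv.2 hy]
  exact hxΨy ▸ hxmap
end
end

section
/- Let 𝒜 be a countable contracted set of disjoint α-paths in S² (each with a chosen extension), and let Φ be a regluing of 𝒜 into some set ℬ of disjoint β-paths. Then ℬ is automatically contracted. -/
open Set Filter Topology OnePoint

noncomputable section

/-- A family of subsets of a metric space is contracted if for every `ε > 0` only finitely many
members have diameter exceeding `ε`. -/
def Contracted {X : Type*} [PseudoMetricSpace X] (S : Set (Set X)) : Prop :=
  ∀ ε > 0, {s ∈ S | ε < Metric.diam s}.Finite


/-!
Near each point `x` of `S²`, the values of `Φ` on `S² ∖ Im 𝒜` accumulate at no more than two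
points. If `x = α p` lies on a path, an accumulation point is reached along points `α̂ z` with
`z ∈ Δ∞`; compactness of `Δ̄∞` sends `z` to some `q ∈ S¹` with `α q = x`, so the accumulation
point is `β_α q` with `q = (p₁, ±p₂)`. Otherwise `Φ` is continuous at `x`.

An arc has empty interior in `S²` (an open set of the sphere does not inject continuously into
`ℝ`), so by Baire `S² ∖ Im 𝒜` is dense, and every point of `β_α` is a limit of values of `Φ`
taken arbitrarily close to `α(S¹)`. Hence if `α(S¹)` is small and near `x`, the connected set
`β_α(S¹)` lies within `δ` of two points and has diameter at most `4δ`. A Lebesgue number of the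
resulting cover of the compact sphere makes this uniform, and only finitely many `α ∈ 𝒜` are
not small.
-/

open Metric

lemma mem_uIcc_or_mem_uIcc_or_mem_uIcc {α : Type*} [LinearOrder α] (x y z : α) :
    y ∈ uIcc x z ∨ x ∈ uIcc y z ∨ z ∈ uIcc x y := by
  simp only [mem_uIcc]
  rcases le_total x y with h | h <;> rcases le_total y z with h' | h' <;>
    rcases le_total x z with h'' | h'' <;> simp [*]

section NoInjection

variable {E : Type*} [NormedAddCommGroup E] [NormedSpace ℝ E]

theorem Continuous.not_injective_of_one_lt_rank {f : E → ℝ} (hf : Continuous f)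
    (hE : 1 < Module.rank ℝ E) : ¬ Function.Injective f := by
  intro hinj
  have hmid : ∀ x y z, x ≠ y → z ≠ y → f y ∉ uIcc (f x) (f z) := by
    intro x y z hxy hzy hy
    obtain ⟨w, hwy, hw⟩ := ((isConnected_compl_singleton_of_one_lt_rank hE y).isPreconnected.image
      f hf.continuousOn).ordConnected.uIcc_subset (mem_image_of_mem f hxy)
        (mem_image_of_mem f hzy) hy
    exact hwy (hinj hw)
  have : Nontrivial E := rank_pos_iff_nontrivial.mp (zero_lt_one.trans hE)
  obtain ⟨v, hv⟩ := exists_ne (0 : E)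
  have hvv : -v ≠ v := fun h => hv <| by
    have : (2 : ℝ) • v = 0 := by rw [two_smul]; nth_rw 1 [← h]; exact neg_add_cancel v
    simpa using this
  rcases mem_uIcc_or_mem_uIcc_or_mem_uIcc (f v) (f 0) (f (-v)) with h | h | h
  · exact hmid v 0 (-v) hv (neg_ne_zero.mpr hv) h
  · exact hmid 0 v (-v) hv.symm hvv h
  · exact hmid v (-v) 0 hvv.symm (neg_ne_zero.mpr hv).symm h

theorem IsOpen.not_injective_of_one_lt_rank (hE : 1 < Module.rank ℝ E) {U : Set E}
    (hU : IsOpen U) (hne : U.Nonempty) {f : U → ℝ} (hf : Continuous f) :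
    ¬ Function.Injective f := by
  intro hinj
  obtain ⟨x, hx⟩ := hne
  obtain ⟨r, hr, hball⟩ := isOpen_iff.mp hU x hx
  let ψ := OpenPartialHomeomorph.univBall x r
  have hsource : ∀ y, y ∈ ψ.source := by simp [ψ, OpenPartialHomeomorph.univBall_source]
  have hψU : ∀ y, ψ y ∈ U := fun y =>
    hball (OpenPartialHomeomorph.univBall_target x hr ▸ ψ.map_source (hsource y))
  have hψ : Continuous ψ := continuousOn_univ.mp (ψ.continuousOn.mono fun y _ => hsource y)
  refine (hf.comp (hψ.subtype_mk hψU)).not_injective_of_one_lt_rank hE fun y z hyz => ?_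
  exact ψ.injOn (hsource y) (hsource z) (congrArg Subtype.val (hinj hyz))

theorem IsOpen.not_injective_of_chartedSpace (hE : 1 < Module.rank ℝ E) {M : Type*}
    [TopologicalSpace M] [ChartedSpace E M] {U : Set M} (hU : IsOpen U) (hne : U.Nonempty)
    {f : U → ℝ} (hf : Continuous f) : ¬ Function.Injective f := by
  intro hinj
  obtain ⟨w, hw⟩ := hne
  let φ := chartAt E w
  let V := φ '' (U ∩ φ.source)
  have hV : IsOpen V := φ.isOpen_image_of_subset_source (hU.inter φ.open_source) inter_subset_right
  have hVt : V ⊆ φ.target := by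
    rintro _ ⟨m, hm, rfl⟩; exact φ.map_source hm.2
  have hVU : ∀ y ∈ V, φ.symm y ∈ U := by
    rintro _ ⟨m, hm, rfl⟩; rw [φ.left_inv hm.2]; exact hm.1
  let g : V → U := fun y => ⟨φ.symm y, hVU y y.2⟩
  have hg : Continuous g := (φ.continuousOn_symm.mono hVt).domRestrict.subtype_mk _
  refine hV.not_injective_of_one_lt_rank hE ⟨φ w, w, ⟨hw, mem_chart_source E w⟩, rfl⟩
    (hf.comp hg) fun y z hyz => Subtype.ext ?_
  exact φ.symm.injOn (hVt y.2) (hVt z.2) (congrArg Subtype.val (hinj hyz))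

end NoInjection

lemma isPreconnected_circS : IsPreconnected circS := by
  have hcirc : circS = (fun z : ℂ => (z.re, z.im)) '' sphere 0 1 := by
    ext p
    constructor
    · intro hp
      refine ⟨⟨p.1, p.2⟩, ?_, rfl⟩
      rw [mem_sphere_zero_iff_norm, Complex.norm_eq_sqrt_sq_add_sq]
      simp [show p.1 ^ 2 + p.2 ^ 2 = 1 from hp]
    · rintro ⟨z, hz, rfl⟩
      rwa [mem_sphere_zero_iff_norm, Complex.norm_eq_sqrt_sq_add_sq, Real.sqrt_eq_one] at hz
  have hrank : 1 < Module.rank ℝ ℂ := by simp [Complex.rank_real_complex]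
  rw [hcirc]
  exact (isConnected_sphere hrank 0 zero_le_one).isPreconnected.image _ (by fun_prop)

lemma fst_mem_Icc_of_mem_circS {p : ℝ × ℝ} (hp : p ∈ circS) : p.1 ∈ Icc (-1 : ℝ) 1 := by
  have : p.1 ^ 2 ≤ 1 := by nlinarith [sq_nonneg p.2, hp.symm]
  exact ⟨by nlinarith, by nlinarith⟩

def upperArc (t : ℝ) : ℝ × ℝ := (t, √(1 - t ^ 2))

lemma upperArc_mem_circS {t : ℝ} (ht : t ∈ Icc (-1 : ℝ) 1) : upperArc t ∈ circS := by
  have : 0 ≤ 1 - t ^ 2 := by nlinarith [ht.1, ht.2]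
  simp [circS, upperArc, Real.sq_sqrt this]

lemma apply_one_zero_mem_pathIm (α : ℝ × ℝ → Sph) : α (1, 0) ∈ pathIm α :=
  mem_image_of_mem α (by simp [circS])

namespace IsAlphaPath

variable {α : ℝ × ℝ → Sph}

lemma apply_upperArc_fst (hα : IsAlphaPath α) {p : ℝ × ℝ} (hp : p ∈ circS) :
    α (upperArc p.1) = α p := by
  have hsq : √(1 - p.1 ^ 2) = |p.2| := by
    rw [← Real.sqrt_sq_eq_abs]; congr 1; linarith [hp.symm]
  refine (hα.2 _ (upperArc_mem_circS (fst_mem_Icc_of_mem_circS hp)) _ hp).2 ⟨rfl, ?_⟩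
  simp only [upperArc, hsq]
  rcases abs_cases p.2 with ⟨h, _⟩ | ⟨h, _⟩ <;> simp [h]

lemma pathIm_eq (hα : IsAlphaPath α) : pathIm α = (α ∘ upperArc) '' Icc (-1) 1 := by
  apply Subset.antisymm
  · rintro _ ⟨p, hp, rfl⟩
    exact ⟨p.1, fst_mem_Icc_of_mem_circS hp, hα.apply_upperArc_fst hp⟩
  · rintro _ ⟨t, ht, rfl⟩
    exact ⟨_, upperArc_mem_circS ht, rfl⟩

lemma continuousOn_comp_upperArc (hα : IsAlphaPath α) :
    ContinuousOn (α ∘ upperArc) (Icc (-1) 1) :=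
  hα.1.comp (by unfold upperArc; fun_prop) fun _ ht => upperArc_mem_circS ht

lemma injOn_comp_upperArc (hα : IsAlphaPath α) : InjOn (α ∘ upperArc) (Icc (-1) 1) :=
  fun _ hs _ ht hst => ((hα.2 _ (upperArc_mem_circS hs) _ (upperArc_mem_circS ht)).1 hst).1

lemma isCompact_pathIm (hα : IsAlphaPath α) : IsCompact (pathIm α) :=
  hα.pathIm_eq ▸ isCompact_Icc.image_of_continuousOn hα.continuousOn_comp_upperArc

lemma interior_pathIm_eq_empty (hα : IsAlphaPath α) : interior (pathIm α) = ∅ := by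
  let a := (Icc (-1 : ℝ) 1).domRestrict (α ∘ upperArc)
  have ha : range a = pathIm α := by rw [range_domRestrict, hα.pathIm_eq]
  let e := ((hα.continuousOn_comp_upperArc.domRestrict).isClosedEmbedding
    hα.injOn_comp_upperArc.injective).isEmbedding.toHomeomorph
  have hU : ∀ y ∈ interior (pathIm α), y ∈ range a := fun y hy => ha ▸ interior_subset hy
  let f : interior (pathIm α) → ℝ := fun y => e.symm ⟨y, hU y y.2⟩
  have hf : Continuous f :=
    continuous_subtype_val.comp (e.symm.continuous.comp (continuous_subtype_val.subtype_mk _))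
  have : Fact (Module.finrank ℝ (EuclideanSpace ℝ (Fin 3)) = 2 + 1) := ⟨by simp⟩
  have hrank : 1 < Module.rank ℝ (EuclideanSpace ℝ (Fin 2)) := by
    rw [← Module.finrank_eq_rank, finrank_euclideanSpace_fin]; norm_num
  by_contra hne
  refine isOpen_interior.not_injective_of_chartedSpace hrank (nonempty_iff_ne_empty.mpr hne) hf
    fun y z hyz => Subtype.ext ?_
  simpa [f] using congrArg Subtype.val (e.symm.injective (Subtype.ext hyz))

end IsAlphaPath

lemma dense_compl_famIm {A : Set (ℝ × ℝ → Sph)} (hA : A.Countable)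
    (halpha : ∀ α ∈ A, IsAlphaPath α) : Dense (famIm A)ᶜ := by
  rw [famIm, compl_iUnion₂]
  exact dense_biInter_of_isOpen (fun α hα => (halpha α hα).isCompact_pathIm.isClosed.isOpen_compl)
    hA fun α hα => interior_eq_empty_iff_dense_compl.mp (halpha α hα).interior_pathIm_eq_empty

lemma DisjointPaths.injOn_pathIm {A : Set (ℝ × ℝ → Sph)} (hA : DisjointPaths A) :
    InjOn pathIm A := by
  intro α hα α' hα' h
  by_contra hne
  have hd : Disjoint (pathIm α) (pathIm α') := hA hα hα' hne
  rw [h, disjoint_self] at hd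
  exact (nonempty_of_mem (apply_one_zero_mem_pathIm α')).ne_empty hd

lemma coe_mem_deltaBar_iff {q : ℝ × ℝ} : (q : OP) ∈ deltaBar ↔ 1 ≤ q.1 ^ 2 + q.2 ^ 2 := by
  simp [deltaBar]

lemma coe_mem_deltaInf_iff {q : ℝ × ℝ} : (q : OP) ∈ deltaInf ↔ 1 < q.1 ^ 2 + q.2 ^ 2 := by
  simp [deltaInf, circOP, coe_mem_deltaBar_iff, circS, lt_iff_le_and_ne, eq_comm]

lemma isCompact_deltaBar : IsCompact deltaBar := by
  have hpre : ((↑) ⁻¹' deltaBar : Set (ℝ × ℝ)) = {p | 1 ≤ p.1 ^ 2 + p.2 ^ 2} :=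
    ext fun _ => coe_mem_deltaBar_iff
  have hclosed : IsClosed ((↑) ⁻¹' deltaBar : Set (ℝ × ℝ)) :=
    hpre ▸ isClosed_le continuous_const (by fun_prop)
  exact ((OnePoint.isClosed_iff_of_mem (mem_insert _ _)).mpr hclosed).isCompact

lemma coe_mem_closure_deltaInf {p : ℝ × ℝ} (hp : p ∈ circS) : (p : OP) ∈ closure deltaInf := by
  have htend : Tendsto (fun t : ℝ => ((t • p : ℝ × ℝ) : OP)) (𝓝[>] 1) (𝓝 (p : OP)) :=
    ((OnePoint.continuous_coe.comp (continuous_id.smul continuous_const)).tendsto' 1 _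
      (by simp)).mono_left nhdsWithin_le_nhds
  refine mem_closure_of_tendsto htend ?_
  filter_upwards [self_mem_nhdsWithin] with t (ht : 1 < t)
  have hp' : p.1 ^ 2 + p.2 ^ 2 = 1 := hp
  rw [coe_mem_deltaInf_iff]
  simp only [Prod.smul_fst, Prod.smul_snd, smul_eq_mul, mul_pow, ← mul_add, hp']
  nlinarith

lemma closure_subset_closure_inter_preimage {X Y : Type*} [TopologicalSpace X]
    [TopologicalSpace Y] {s : Set X} {f : X → Y} {D : Set Y} (hf : IsOpenMap (s.domRestrict f))
    (hD : Dense D) : closure s ⊆ closure (s ∩ f ⁻¹' D) := by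
  have h := Subtype.dense_iff.mp (hD.preimage hf)
  have himage : Subtype.val '' (s.domRestrict f ⁻¹' D) = s ∩ f ⁻¹' D := by
    ext x; simp [and_comm]
  rw [himage] at h
  exact closure_minimal h isClosed_closure

namespace IsExtension

variable {α : ℝ × ℝ → Sph} {ext : OP → Sph}

lemma isOpenMap_domRestrict (he : IsExtension α ext) (hα : IsAlphaPath α) :
    IsOpenMap (deltaInf.domRestrict ext) := by
  refine IsOpenEmbedding.isOpenMap ⟨he.2.2.1, ?_⟩
  rw [range_domRestrict, he.2.2.2]
  exact hα.isCompact_pathIm.isClosed.isOpen_compl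

lemma neBot_nhdsWithin (he : IsExtension α ext) (hα : IsAlphaPath α) {D : Set Sph}
    (hD : Dense D) {p : ℝ × ℝ} (hp : p ∈ circS) : (𝓝[deltaInf ∩ ext ⁻¹' D] (p : OP)).NeBot :=
  mem_closure_iff_nhdsWithin_neBot.mp
    (closure_subset_closure_inter_preimage (he.isOpenMap_domRestrict hα) hD
      (coe_mem_closure_deltaInf hp))

lemma tendsto_nhdsWithin_deltaBar (he : IsExtension α ext) {p : ℝ × ℝ} (hp : p ∈ circS) :
    Tendsto ext (𝓝[deltaBar] (p : OP)) (𝓝 (α p)) :=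
  he.2.1 p hp ▸ he.1 _ (coe_mem_deltaBar_iff.mpr hp.ge)

lemma exists_le_nhds_of_tendsto (he : IsExtension α ext) (𝒱 : Ultrafilter OP)
    (h𝒱 : ↑𝒱 ≤ 𝓟 deltaInf) {x : Sph} (hx : x ∈ pathIm α) (htend : Tendsto ext 𝒱 (𝓝 x)) :
    ∃ q ∈ circS, α q = x ∧ ↑𝒱 ≤ 𝓝 (q : OP) := by
  have h𝒱bar : ↑𝒱 ≤ 𝓟 deltaBar := h𝒱.trans (principal_mono.2 sdiff_subset)
  obtain ⟨z, hz, hz𝒱⟩ := isCompact_deltaBar.ultrafilter_le_nhds 𝒱 h𝒱bar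
  have hzx : ext z = x :=
    tendsto_nhds_unique ((he.1 z hz).tendsto.comp (le_inf hz𝒱 h𝒱bar)) htend
  have hzInf : z ∉ deltaInf := fun hzi =>
    (he.2.2.2 ▸ mem_image_of_mem ext hzi : ext z ∈ (pathIm α)ᶜ) (hzx ▸ hx)
  obtain ⟨q, hq, rfl⟩ : z ∈ circOP := by_contra fun h => hzInf ⟨hz, h⟩
  exact ⟨q, hq, (he.2.1 q hq).symm.trans hzx, hz𝒱⟩

end IsExtension

lemma IsPreconnected.diam_le_of_subset_closedBall_union {X : Type*} [PseudoMetricSpace X]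
    {s : Set X} (hs : IsPreconnected s) {u v : X} {δ : ℝ} (hδ : 0 ≤ δ)
    (h : s ⊆ closedBall u δ ∪ closedBall v δ) : diam s ≤ 4 * δ := by
  by_cases huv : dist u v ≤ 2 * δ
  · refine diam_le_of_forall_dist_le (by positivity) fun y hy y' hy' => ?_
    have hvu : dist v u ≤ 2 * δ := dist_comm u v ▸ huv
    rcases h hy with h1 | h1 <;> rcases h hy' with h2 | h2 <;>
      rw [mem_closedBall] at h1 h2 <;> rw [dist_comm y' _] at h2
    · linarith [dist_triangle y u y']
    · linarith [dist_triangle4 y u v y']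
    · linarith [dist_triangle4 y v u y']
    · linarith [dist_triangle y v y']
  · have hdisj := closedBall_disjoint_closedBall (x := u) (y := v) (δ := δ) (ε := δ)
      (by linarith)
    rcases isPreconnected_iff_subset_of_disjoint_closed.mp hs _ _ isClosed_closedBall
      isClosed_closedBall h (by rw [hdisj.inter_eq, inter_empty]) with hsub | hsub
    all_goals linarith [diam_mono hsub isBounded_closedBall,
      diam_closedBall (x := u) hδ, diam_closedBall (x := v) hδ]

namespace IsRegluing

variable {A B : Set (ℝ × ℝ → Sph)} {ext : (ℝ × ℝ → Sph) → OP → Sph}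
  {b : (ℝ × ℝ → Sph) → ℝ × ℝ → Sph} {Φ : Sph → Sph}

lemma exists_eq_of_mapClusterPt (hreg : IsRegluing A ext B b Φ)
    (hdata : RegluingData A ext B b) {α : ℝ × ℝ → Sph} (hα : α ∈ A) {x z : Sph}
    (hx : x ∈ pathIm α) (hz : MapClusterPt z (𝓝[(famIm A)ᶜ] x) Φ) :
    ∃ q ∈ circS, α q = x ∧ b α q = z := by
  obtain ⟨𝒰, h𝒰, hΦ⟩ := mapClusterPt_iff_ultrafilter.mp hz
  have he := hdata.extOk α hα
  have hD : (famIm A)ᶜ ∈ 𝒰 := h𝒰 self_mem_nhdsWithin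
  have : (comap (ext α) 𝒰 ⊓ 𝓟 deltaInf).NeBot := by
    refine Ultrafilter.comap_inf_principal_neBot_of_image_mem (mem_of_superset hD ?_)
    rw [he.2.2.2]
    exact compl_subset_compl.mpr (subset_biUnion_of_mem hα)
  let 𝒱 := Ultrafilter.of (comap (ext α) 𝒰 ⊓ 𝓟 deltaInf)
  have h𝒱 : ↑𝒱 ≤ comap (ext α) 𝒰 ⊓ 𝓟 deltaInf := Ultrafilter.of_le _
  have hext : Tendsto (ext α) 𝒱 𝒰 := tendsto_iff_comap.mpr (h𝒱.trans inf_le_left)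
  obtain ⟨q, hq, hqx, h𝒱q⟩ := he.exists_le_nhds_of_tendsto 𝒱 (h𝒱.trans inf_le_right) hx
    (hext.mono_right (h𝒰.trans nhdsWithin_le_nhds))
  have hmem : deltaInf ∩ ext α ⁻¹' (famIm A)ᶜ ∈ 𝒱 :=
    inter_mem ((h𝒱.trans inf_le_right) (mem_principal_self _)) (hext hD)
  exact ⟨q, hq, hqx, tendsto_nhds_unique
    ((hreg.tendsto α hα q hq).mono_left (le_inf h𝒱q (le_principal_iff.mpr hmem))) (hΦ.comp hext)⟩

lemma exists_tendsto_nhdsSet_pair (hreg : IsRegluing A ext B b Φ)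
    (hdata : RegluingData A ext B b) (x : Sph) :
    ∃ u v, Tendsto Φ (𝓝[(famIm A)ᶜ] x) (𝓝ˢ {u, v}) := by
  suffices ∃ u v, ∀ z, MapClusterPt z (𝓝[(famIm A)ᶜ] x) Φ → z ∈ ({u, v} : Set Sph) by
    obtain ⟨u, v, h⟩ := this
    exact ⟨u, v, isCompact_univ.tendsto_nhdsSet_of_mapClusterPt (univ_mem' mem_univ)
      fun z _ => h z⟩
  by_cases hx : x ∈ famIm A
  · obtain ⟨α, hα, p, hp, rfl⟩ := mem_iUnion₂.mp hx
    refine ⟨b α p, b α (p.1, -p.2), fun z hz => ?_⟩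
    obtain ⟨q, hq, hqp, rfl⟩ := hreg.exists_eq_of_mapClusterPt hdata hα ⟨p, hp, rfl⟩ hz
    obtain ⟨h1, h2 | h2⟩ := ((hdata.alpha α hα).2 q hq p hp).mp hqp
    · exact Or.inl (congrArg (b α) (Prod.ext h1 h2))
    · exact Or.inr (congrArg (b α) (Prod.ext h1 h2 : q = (p.1, -p.2)))
  · exact ⟨Φ x, Φ x, fun z hz => Or.inl (eq_of_nhds_neBot (ClusterPt.mono hz (hreg.contOn x hx)))⟩

lemma pathIm_subset_closure_image (hreg : IsRegluing A ext B b Φ)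
    (hdata : RegluingData A ext B b) (hA : A.Countable) {α : ℝ × ℝ → Sph} (hα : α ∈ A)
    {O : Set Sph} (hO : IsOpen O) (hαO : pathIm α ⊆ O) :
    pathIm (b α) ⊆ closure (Φ '' ((famIm A)ᶜ ∩ O)) := by
  rintro _ ⟨p, hp, rfl⟩
  have he := hdata.extOk α hα
  have := he.neBot_nhdsWithin (hdata.alpha α hα) (dense_compl_famIm hA hdata.alpha) hp
  refine mem_closure_of_tendsto (hreg.tendsto α hα p hp) ?_
  have hO' : ∀ᶠ z in 𝓝[deltaInf ∩ ext α ⁻¹' (famIm A)ᶜ] (p : OP), ext α z ∈ O :=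
    (he.tendsto_nhdsWithin_deltaBar hp).eventually (hO.mem_nhds (hαO ⟨p, hp, rfl⟩))
      |>.filter_mono (nhdsWithin_mono _ fun z hz => hz.1.1)
  filter_upwards [hO', self_mem_nhdsWithin] with z hzO hz
  exact mem_image_of_mem Φ ⟨hz.2, hzO⟩

lemma exists_pos_diam_pathIm_le_of_subset_ball (hreg : IsRegluing A ext B b Φ)
    (hdata : RegluingData A ext B b) (hA : A.Countable) (x : Sph) {δ : ℝ} (hδ : 0 < δ) :
    ∃ r > 0, ∀ α ∈ A, pathIm α ⊆ ball x r → diam (pathIm (b α)) ≤ 4 * δ := by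
  obtain ⟨u, v, huv⟩ := hreg.exists_tendsto_nhdsSet_pair hdata x
  have hballs : ball u δ ∪ ball v δ ∈ 𝓝ˢ {u, v} :=
    (isOpen_ball.union isOpen_ball).mem_nhdsSet.mpr <| by
      rintro _ (rfl | rfl)
      exacts [Or.inl (mem_ball_self hδ), Or.inr (mem_ball_self hδ)]
  obtain ⟨r, hr, hrsub⟩ := mem_nhdsWithin_iff.mp (huv hballs)
  refine ⟨r, hr, fun α hα hαr => ?_⟩
  have hβ := (hdata.beta (b α) (hdata.bij.mapsTo hα)).1
  refine (isPreconnected_circS.image _ hβ).diam_le_of_subset_closedBall_union (u := u) (v := v)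
    hδ.le ?_
  calc pathIm (b α) ⊆ closure (Φ '' ((famIm A)ᶜ ∩ ball x r)) :=
        hreg.pathIm_subset_closure_image hdata hA hα isOpen_ball hαr
    _ ⊆ closure (ball u δ ∪ ball v δ) :=
        closure_mono (image_subset_iff.mpr fun y hy => hrsub ⟨hy.2, hy.1⟩)
    _ ⊆ closedBall u δ ∪ closedBall v δ := by
        rw [closure_union]
        exact union_subset_union closure_ball_subset_closedBall closure_ball_subset_closedBall

lemma exists_pos_diam_pathIm_le_of_diam_lt (hreg : IsRegluing A ext B b Φ)
    (hdata : RegluingData A ext B b) (hA : A.Countable) {δ : ℝ} (hδ : 0 < δ) :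
    ∃ η > 0, ∀ α ∈ A, diam (pathIm α) < η → diam (pathIm (b α)) ≤ 4 * δ := by
  choose r hr hrδ using fun x => hreg.exists_pos_diam_pathIm_le_of_subset_ball hdata hA x hδ
  obtain ⟨η, hη, hleb⟩ := lebesgue_number_lemma_of_metric isCompact_univ
    (fun x => isOpen_ball) fun x _ => mem_iUnion.mpr ⟨x, mem_ball_self (hr x)⟩
  refine ⟨η, hη, fun α hα hαη => ?_⟩
  have hbdd := (hdata.alpha α hα).isCompact_pathIm.isBounded
  obtain ⟨x, hx⟩ := hleb (α (1, 0)) (mem_univ _)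
  refine hrδ x α hα fun y hy => hx ?_
  exact mem_ball.mpr
    ((dist_le_diam_of_mem hbdd hy (apply_one_zero_mem_pathIm α)).trans_lt hαη)

end IsRegluing

/-- If `𝒜` is a countable contracted set of disjoint α-paths and `Φ` is a
regluing of `𝒜` into some set `ℬ` of disjoint β-paths, then `ℬ` is automatically contracted. -/
theorem regluing_target_contracted (A B : Set (ℝ × ℝ → Sph))
    (ext : (ℝ × ℝ → Sph) → OP → Sph) (b : (ℝ × ℝ → Sph) → ℝ × ℝ → Sph) (Φ : Sph → Sph)
    (hA : A.Countable) (hcontr : Contracted (pathIm '' A))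
    (hdata : RegluingData A ext B b) (hreg : IsRegluing A ext B b Φ) :
    Contracted (pathIm '' B) := by
  intro ε hε
  obtain ⟨η, hη, hsmall⟩ :=
    hreg.exists_pos_diam_pathIm_le_of_diam_lt hdata hA (δ := ε / 8) (by positivity)
  have hbig : {α ∈ A | η / 2 < diam (pathIm α)}.Finite :=
    Finite.of_finite_image ((hcontr (η / 2) (by positivity)).subset <| by
      rintro _ ⟨α, hα, rfl⟩; exact ⟨⟨α, hα.1, rfl⟩, hα.2⟩)
      (hdata.disjA.injOn_pathIm.mono fun _ hα => hα.1)
  refine (hbig.image (pathIm ∘ b)).subset ?_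
  rintro _ ⟨⟨β, hβ, rfl⟩, hdiam⟩
  obtain ⟨α, hα, rfl⟩ := hdata.bij.surjOn hβ
  refine ⟨α, ⟨hα, ?_⟩, rfl⟩
  by_contra hle
  linarith [hsmall α hα (by linarith)]
end
end

section
/- Let Λ be a topological space and X a metric space. Let ℱ be an equicontinuous family of maps from Λ to X, let O ⊆ Λ be an open subset, and let ν : Λ → X be a continuous map such that for every λ ∈ O there exists f ∈ ℱ with ν(λ) = f(λ). Then for every λ* in the boundary of O, the point ν(λ*) lies in the closure of the set ℱ(λ*) = {f(λ*) : f ∈ ℱ}. -/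
open Set Filter Topology

/-! Near a boundary point `λ*` pick `λ ∈ O` so close that `ν λ` is near `ν λ*` and no `f ∈ ℱ`
moves much between `λ` and `λ*`; the `f` with `ν λ = f λ` then has `f λ*` near `ν λ*`. -/

def EquicontFamily {Λ X : Type*} [TopologicalSpace Λ] [MetricSpace X]
    (ℱ : Set (Λ → X)) : Prop :=
  ∀ lam : Λ, ∀ ε > 0, ∃ V ∈ 𝓝 lam, ∀ lam' ∈ V, ∀ f ∈ ℱ, dist (f lam') (f lam) < ε

theorem EquicontinuousAt.mem_closure_range_apply {ι Λ X : Type*} [TopologicalSpace Λ]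
    [UniformSpace X] {F : ι → Λ → X} {x : Λ} (hF : EquicontinuousAt F x) {ν : Λ → X}
    (hν : ContinuousAt ν x) (hν_mem : ∃ᶠ y in 𝓝 x, ν y ∈ range (F · y)) :
    ν x ∈ closure (range (F · x)) := by
  refine UniformSpace.mem_closure_iff_ball.2 fun hU => ?_
  obtain ⟨V, hV, _, hVU⟩ := comp_symm_mem_uniformity_sets hU
  obtain ⟨y, ⟨hνy, hFy⟩, i, hi⟩ :=
    ((hν.eventually (mem_nhds_left (ν x) hV)).and (hF V hV)).and_frequently hν_mem |>.exists
  refine ⟨F i x, hVU (SetRel.prodMk_mem_comp hνy ?_), i, rfl⟩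
  rw [← hi]
  exact SetRel.symm V (hFy i)

theorem EquicontFamily.equicontinuous {Λ X : Type*} [TopologicalSpace Λ] [MetricSpace X]
    {ℱ : Set (Λ → X)} (hℱ : EquicontFamily ℱ) : Equicontinuous ((↑) : ℱ → Λ → X) := by
  refine fun lam => Metric.equicontinuousAt_iff_right.2 fun ε hε => ?_
  obtain ⟨V, hV, hdist⟩ := hℱ lam ε hε
  filter_upwards [hV] with lam' hlam' f
  rw [dist_comm]
  exact hdist lam' hlam' f f.2

theorem equicontinuous_boundary_value_general {Λ X : Type*} [TopologicalSpace Λ] [MetricSpace X]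
    (ℱ : Set (Λ → X)) (hℱ : EquicontFamily ℱ) (O : Set Λ)
    (ν : Λ → X) (hν : Continuous ν) (h : ∀ lam ∈ O, ∃ f ∈ ℱ, ν lam = f lam) :
    ∀ lam' ∈ frontier O, ν lam' ∈ closure {x : X | ∃ f ∈ ℱ, x = f lam'} := by
  intro lam hlam
  have hν_mem : ∃ᶠ y in 𝓝 lam, ν y ∈ range fun f : ℱ => f.1 y :=
    (mem_closure_iff_frequently.1 hlam.1).mono fun y hy => by
      obtain ⟨f, hf, hfy⟩ := h y hy
      exact ⟨⟨f, hf⟩, hfy.symm⟩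
  convert (hℱ.equicontinuous lam).mem_closure_range_apply hν.continuousAt hν_mem using 2
  ext x
  simp [eq_comm]

/-- Let `ℱ` be an equicontinuous family of maps `Λ → X`, `O ⊆ Λ` open, and
`ν : Λ → X` continuous with `ν lam ∈ ℱ(lam)` for all `lam ∈ O`.  Then for every `lam*` in
the boundary of `O`, the point `ν lam*` lies in the closure of `ℱ(lam*) = {f lam* : f ∈ ℱ}`. -/
theorem equicontinuous_boundary_value {Λ X : Type*} [TopologicalSpace Λ] [MetricSpace X]
    (ℱ : Set (Λ → X)) (hℱ : EquicontFamily ℱ) (O : Set Λ) (hO : IsOpen O)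
    (ν : Λ → X) (hν : Continuous ν) (h : ∀ lam ∈ O, ∃ f ∈ ℱ, ν lam = f lam) :
    ∀ lam' ∈ frontier O, ν lam' ∈ closure {x : X | ∃ f ∈ ℱ, x = f lam'} :=
  equicontinuous_boundary_value_general ℱ hℱ O ν hν h
end

section
/- Suppose a continuous map φ : S² → S² is the uniform limit (with respect to the metric of S²) of a sequence of homeomorphisms φₙ : S² → S². Then for every point v ∈ S², the fiber φ⁻¹(v) is nonempty and connected. -/
open Set Filter Topology

noncomputable section

/-!
The fibre `φ⁻¹{v}` is compact, so it is connected (and nonempty) as soon as every open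
neighbourhood `W` of it contains a connected set containing it; for `W = ∅` this forces
nonemptiness. Compactness gives `δ > 0` with `φ⁻¹(B(v, δ)) ⊆ W`. If the homeomorphism `φₙ` is
uniformly `ε`-close to `φ` with `ε < δ / 2`, then `φₙ⁻¹(B̄(v, ε))` lies between the fibre and `W`,
and it is connected because small closed balls of `S²` (spherical caps) are.
-/

open Metric
open scoped RealInnerProductSpace

section Cap

variable {E : Type*} [NormedAddCommGroup E] [InnerProductSpace ℝ E]

lemma dist_le_iff_le_inner_of_norm_eq_one {v x : E} (hv : ‖v‖ = 1) (hx : ‖x‖ = 1)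
    {r : ℝ} (hr : 0 ≤ r) : dist x v ≤ r ↔ 1 - r ^ 2 / 2 ≤ ⟪v, x⟫ := by
  have hsq : dist x v ^ 2 = 2 - 2 * ⟪v, x⟫ := by
    rw [dist_eq_norm, norm_sub_sq_real, hx, hv, real_inner_comm]; ring
  rw [← sq_le_sq₀ dist_nonneg hr, hsq]
  constructor <;> intro h <;> linarith

/- Radial projection maps the convex set `closedBall 0 1 ∩ {z | c ≤ ⟪v, z⟫}`, which avoids `0`
since `c > 0`, onto the cap. -/
lemma isConnected_sphere_inter_closedBall {v : E} (hv : ‖v‖ = 1) {r : ℝ} (hr0 : 0 ≤ r)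
    (hr : r ^ 2 < 2) : IsConnected (sphere 0 1 ∩ closedBall v r) := by
  set c := 1 - r ^ 2 / 2 with hc_def
  have hc : 0 < c := by linarith
  set S := closedBall (0 : E) 1 ∩ {z | c ≤ ⟪v, z⟫}
  have hS : IsConnected S := by
    refine ⟨⟨v, by simp [S, hv]; linarith [sq_nonneg r]⟩, ?_⟩
    exact ((convex_closedBall _ _).inter
      (convex_halfSpace_ge (innerₛₗ ℝ v).isLinear c)).isPreconnected
  have hS0 : ∀ z ∈ S, z ≠ 0 := by
    rintro z ⟨-, hz⟩ rfl
    simp only [mem_ofPred_eq, inner_zero_right] at hz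
    linarith
  have hcont : ContinuousOn NormedSpace.normalize S :=
    ((continuous_norm.continuousOn.inv₀ fun z hz => norm_ne_zero_iff.2 (hS0 z hz)).smul
      continuousOn_id)
  convert hS.image NormedSpace.normalize hcont using 1
  refine Subset.antisymm (fun x ⟨hx1, hx2⟩ => ?_) ?_
  · have hx : ‖x‖ = 1 := by simpa using hx1
    exact ⟨x, ⟨by simp [hx], (dist_le_iff_le_inner_of_norm_eq_one hv hx hr0).1 hx2⟩,
      NormedSpace.normalize_eq_self_of_norm_eq_one hx⟩
  · rintro _ ⟨z, ⟨hz1, hz2⟩, rfl⟩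
    have hz := norm_pos_iff.2 (hS0 z ⟨hz1, hz2⟩)
    have hn : ‖NormedSpace.normalize z‖ = 1 := NormedSpace.norm_normalize (hS0 z ⟨hz1, hz2⟩)
    refine ⟨by simpa using hn, (dist_le_iff_le_inner_of_norm_eq_one hv hn hr0).2 ?_⟩
    have hz1 : ‖z‖ ≤ 1 := by simpa using hz1
    calc c ≤ ⟪v, z⟫ := hz2
      _ ≤ ‖z‖⁻¹ * ⟪v, z⟫ := le_mul_of_one_le_left (hc.le.trans hz2) (one_le_inv₀ hz |>.2 hz1)
      _ = ⟪v, NormedSpace.normalize z⟫ := by rw [NormedSpace.normalize, real_inner_smul_right]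

end Cap

lemma eventually_isConnected_closedBall_sph (v : Sph) :
    ∀ᶠ ε in 𝓝[>] 0, IsConnected (closedBall v ε) := by
  filter_upwards [Ioo_mem_nhdsGT one_pos] with ε ⟨hε0, hε1⟩
  have hv : ‖(v : EuclideanSpace ℝ (Fin 3))‖ = 1 := by simp
  have hcap := isConnected_sphere_inter_closedBall hv hε0.le (by nlinarith)
  rw [← Subtype.image_preimage_coe] at hcap
  exact ⟨hcap.nonempty.of_image, IsInducing.subtypeVal.isPreconnected_image.1 hcap.2⟩

lemma IsCompact.isConnected_of_forall_isOpen_superset {X : Type*} [TopologicalSpace X]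
    [T2Space X] {K : Set X} (hK : IsCompact K)
    (h : ∀ W, IsOpen W → K ⊆ W → ∃ C, IsConnected C ∧ K ⊆ C ∧ C ⊆ W) : IsConnected K := by
  refine ⟨?_, isPreconnected_iff_subset_of_disjoint.2 fun u v hu hv hKuv huv => ?_⟩
  · by_contra hK0
    obtain ⟨C, hC, -, hC0⟩ := h ∅ isOpen_empty (not_nonempty_iff_eq_empty.1 hK0).subset
    exact hC.nonempty.ne_empty (subset_empty_iff.1 hC0)
  obtain ⟨U, V, hU, hV, hKU, hKV, hUV⟩ := SeparatedNhds.of_isCompact_isCompact (hK.diff hv)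
    (hK.diff hu) (disjoint_left.2 fun x hxu hxv => hxu.2 ((hKuv hxv.1).resolve_left hxv.2))
  have hKUV : K ⊆ U ∪ V := fun x hx => by
    by_cases hxv : x ∈ v
    · exact Or.inr (hKV ⟨hx, fun hxu => huv.subset ⟨hx, hxu, hxv⟩⟩)
    · exact Or.inl (hKU ⟨hx, hxv⟩)
  obtain ⟨C, hC, hKC, hCUV⟩ := h (U ∪ V) (hU.union hV) hKUV
  rcases isPreconnected_iff_subset_of_disjoint.1 hC.2 U V hU hV hCUV
    (by rw [hUV.inter_eq, inter_empty]) with hCU | hCV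
  · exact Or.inl fun x hx => by_contra fun hxu =>
      disjoint_left.1 hUV (hCU (hKC hx)) (hKV ⟨hx, hxu⟩)
  · exact Or.inr fun x hx => by_contra fun hxv =>
      disjoint_left.1 hUV (hKU ⟨hx, hxv⟩) (hCV (hKC hx))

lemma exists_preimage_ball_subset_of_preimage_singleton_subset {X Y : Type*}
    [TopologicalSpace X] [CompactSpace X] [MetricSpace Y] {φ : X → Y} (hφ : Continuous φ)
    {v : Y} {W : Set X} (hW : IsOpen W) (hvW : φ ⁻¹' {v} ⊆ W) :
    ∃ δ > 0, φ ⁻¹' ball v δ ⊆ W := by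
  have hv : v ∉ φ '' Wᶜ := fun ⟨x, hxW, hx⟩ => hxW (hvW hx)
  obtain ⟨δ, hδ, hball⟩ :=
    Metric.isOpen_iff.1 (hW.isClosed_compl.isCompact.image hφ).isClosed.isOpen_compl v hv
  exact ⟨δ, hδ, fun x hx => by_contra fun hxW => hball hx ⟨x, hxW, rfl⟩⟩

theorem isConnected_preimage_singleton_of_tendstoUniformly {X Y : Type*} [TopologicalSpace X]
    [CompactSpace X] [T2Space X] [MetricSpace Y]
    (hY : ∀ v : Y, ∀ᶠ ε in 𝓝[>] 0, IsConnected (closedBall v ε))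
    {φ : X → Y} (hφ : Continuous φ) {φn : ℕ → X ≃ₜ Y}
    (hconv : TendstoUniformly (fun n x => φn n x) φ atTop) (v : Y) :
    IsConnected (φ ⁻¹' {v}) := by
  refine (isClosed_singleton.preimage hφ).isCompact.isConnected_of_forall_isOpen_superset
    fun W hW hvW => ?_
  obtain ⟨δ, hδ, hδW⟩ := exists_preimage_ball_subset_of_preimage_singleton_subset hφ hW hvW
  obtain ⟨ε, hεC, hε0, hεδ⟩ := ((hY v).and (Ioo_mem_nhdsGT (half_pos hδ))).exists
  obtain ⟨m, hm⟩ := (Metric.tendstoUniformly_iff.1 hconv ε hε0).exists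
  refine ⟨φn m ⁻¹' closedBall v ε, (φn m).isConnected_preimage.2 hεC, fun x hx => ?_,
    fun x hx => hδW ?_⟩
  · rw [mem_preimage, mem_closedBall, dist_comm, ← show φ x = v from hx]
    exact (hm x).le
  · calc dist (φ x) v ≤ dist (φ x) (φn m x) + dist (φn m x) v := dist_triangle _ _ _
      _ < δ := by linarith [hm x, mem_closedBall.1 hx]

/-- If a continuous map `φ : S² → S²` is the uniform limit of a sequence of
homeomorphisms `φₙ : S² → S²`, then every fiber `φ⁻¹ {v}` is nonempty and connected. -/
theorem fiber_connected_of_uniform_limit_of_homeos (φ : Sph → Sph) (hφ : Continuous φ)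
    (φn : ℕ → Sph ≃ₜ Sph)
    (hconv : TendstoUniformly (fun n x => φn n x) φ atTop) :
    ∀ v : Sph, IsConnected (φ ⁻¹' {v}) :=
  isConnected_preimage_singleton_of_tendstoUniformly eventually_isConnected_closedBall_sph hφ hconv
end
end

section
/- Let g : S² → S² be a ramified covering of degree 2, i.e. a ramified covering such that every point of S² that is not a critical value of g has exactly two g-preimages. Then there exists a homeomorphism M : S² → S², different from the identity, such that M ∘ M = id and g ∘ M = g. -/
/-!
In charts, `g` is `z ↦ z ^ k`. So a critical point is not locally injective while the other
points of its chart are, hence critical points are isolated and, by compactness, finite. Values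
near a critical value `g c` then have two preimages close to `c`; a second preimage `d ≠ c` of
`g c` would give generic values a third one close to `d`. Thus the fibre over a critical value is
the critical point alone, and every fibre has at most two points. Swapping the two points of each
fibre gives an involution `M` with `g ∘ M = g` whose fixed points are the critical points. A cluster
value of `M` at `x` lies in the fibre of `x`; it cannot be `x` when `M x ≠ x`, because `g` is
injective near such `x`. So `M` is continuous, as `S²` is compact.
-/

open Set Filter Topology

noncomputable section

/-- The open unit disk in ℂ. -/
def unitDisk : Set ℂ := Metric.ball 0 1

/-- `f` is a ramified covering of local degree `k` at `x`: in suitable local homeomorphic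
coordinates identifying neighborhoods of `x` and `f x` with the unit disk (sending `x` and
`f x` to `0`), the map `f` becomes `z ↦ z ^ k`. -/
def IsRamifiedAt (f : Sph → Sph) (x : Sph) (k : ℕ) : Prop :=
  0 < k ∧ ∃ (U V : Set Sph) (hx : x ∈ U) (hfx : f x ∈ V) (hmap : Set.MapsTo f U V),
    IsOpen U ∧ IsOpen V ∧
      ∃ (φ : U ≃ₜ unitDisk) (ψ : V ≃ₜ unitDisk),
        (φ ⟨x, hx⟩ : ℂ) = 0 ∧ (ψ ⟨f x, hfx⟩ : ℂ) = 0 ∧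
          ∀ z : U, (ψ ⟨f z, hmap z.2⟩ : ℂ) = (φ z : ℂ) ^ k

/-- `f` is a ramified covering: a continuous map that is a ramified covering of some local
degree at every point. -/
def IsRamifiedCovering (f : Sph → Sph) : Prop :=
  Continuous f ∧ ∀ x : Sph, ∃ k : ℕ, IsRamifiedAt f x k

/-- A critical point of `f` is a point of local degree at least 2. -/
def IsCriticalPt (f : Sph → Sph) (x : Sph) : Prop := ∃ k, 2 ≤ k ∧ IsRamifiedAt f x k

/-- A critical value of `f` is the image of a critical point. -/
def IsCriticalValue (f : Sph → Sph) (y : Sph) : Prop := ∃ x, IsCriticalPt f x ∧ f x = y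

/-- `f` is a ramified covering of degree 2: every point that is not a critical value has
exactly two preimages. -/
def IsDegreeTwoRamifiedCovering (f : Sph → Sph) : Prop :=
  IsRamifiedCovering f ∧ ∀ y : Sph, ¬IsCriticalValue f y → Nat.card (f ⁻¹' {y} : Set Sph) = 2

theorem Homeomorph.exists_openPartialHomeomorph {X Y : Type*} [TopologicalSpace X]
    [TopologicalSpace Y] {U : Set X} {V : Set Y} (hU : IsOpen U) (hV : IsOpen V) [Nonempty U]
    [Nonempty V] (e : U ≃ₜ V) :
    ∃ E : OpenPartialHomeomorph X Y, E.source = U ∧ ∀ z : U, E z = e z := by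
  let iU := hU.isOpenEmbedding_subtypeVal.toOpenPartialHomeomorph Subtype.val
  let iV := hV.isOpenEmbedding_subtypeVal.toOpenPartialHomeomorph Subtype.val
  refine ⟨(iU.symm.transHomeomorph e).trans iV, by simp [iU, iV], fun z => ?_⟩
  simp [iU, iV, Topology.IsOpenEmbedding.toOpenPartialHomeomorph_left_inv]

/-- The data of `IsRamifiedAt`, with both charts extended to open partial homeomorphisms of the
ambient spaces. -/
structure PowerChart {X Y : Type*} [TopologicalSpace X] [TopologicalSpace Y] (f : X → Y) (x : X)
    (k : ℕ) where
  φ : OpenPartialHomeomorph X ℂ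
  ψ : OpenPartialHomeomorph Y ℂ
  pos : 0 < k
  mem_source : x ∈ φ.source
  φ_self : φ x = 0
  mapsTo : MapsTo f φ.source ψ.source
  ψ_map_eq_pow : ∀ z ∈ φ.source, ψ (f z) = φ z ^ k

theorem IsRamifiedAt.nonempty_powerChart {f : Sph → Sph} {x : Sph} {k : ℕ}
    (h : IsRamifiedAt f x k) : Nonempty (PowerChart f x k) := by
  obtain ⟨hk, U, V, hx, hfx, hmap, hU, hV, φ, ψ, hφx, -, hφψ⟩ := h
  have : Nonempty U := ⟨⟨x, hx⟩⟩
  have : Nonempty V := ⟨⟨f x, hfx⟩⟩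
  have : Nonempty unitDisk := ⟨φ ⟨x, hx⟩⟩
  obtain ⟨Φ, hΦU, hΦ⟩ := φ.exists_openPartialHomeomorph hU Metric.isOpen_ball
  obtain ⟨Ψ, hΨV, hΨ⟩ := ψ.exists_openPartialHomeomorph hV Metric.isOpen_ball
  refine ⟨⟨Φ, Ψ, hk, hΦU ▸ hx, (hΦ ⟨x, hx⟩).trans hφx, hΦU ▸ hΨV ▸ hmap, ?_⟩⟩
  intro z hz
  rw [hΦU] at hz
  exact (hΨ ⟨f z, hmap hz⟩).trans ((hφψ ⟨z, hz⟩).trans (congrArg (· ^ k) (hΦ ⟨z, hz⟩).symm))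

theorem Complex.exists_ne_pow_eq {k : ℕ} (hk : 2 ≤ k) {u : ℂ} (hu : u ≠ 0) :
    ∃ w w' : ℂ, w ≠ w' ∧ w ^ k = u ∧ w' ^ k = u := by
  obtain ⟨w, hw⟩ := IsAlgClosed.exists_pow_nat_eq u (by omega : 0 < k)
  have hω := Complex.isPrimitiveRoot_exp k (by omega)
  have hw0 : w ≠ 0 := by rintro rfl; exact hu (by rw [← hw, zero_pow (by omega)])
  refine ⟨w, Complex.exp (2 * Real.pi * Complex.I / k) * w, ?_, hw, ?_⟩
  · intro h
    exact hω.ne_one hk (by simpa [hw0] using (mul_left_eq_self₀.1 h.symm))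
  · rw [mul_pow, hω.pow_eq_one, one_mul, hw]

theorem Complex.exists_mem_nhds_injOn_pow {k : ℕ} (hk : 0 < k) {w : ℂ} (hw : w ≠ 0) :
    ∃ N ∈ 𝓝 w, InjOn (· ^ k) N := by
  have hderiv : (k : ℂ) * w ^ (k - 1) ≠ 0 :=
    mul_ne_zero (by exact_mod_cast hk.ne') (pow_ne_zero _ hw)
  have hinv := (hasStrictDerivAt_pow k w).eventually_left_inverse hderiv
  exact ⟨_, hinv, fun a ha b hb hab => by rw [← ha, ← hb]; simp only at hab; rw [hab]⟩

namespace PowerChart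

variable {X Y : Type*} [TopologicalSpace X] [TopologicalSpace Y] {f : X → Y} {x : X} {k : ℕ}

theorem map_self_mem_source (C : PowerChart f x k) : f x ∈ C.ψ.source := C.mapsTo C.mem_source

theorem ψ_map_self (C : PowerChart f x k) : C.ψ (f x) = 0 := by
  rw [C.ψ_map_eq_pow x C.mem_source, C.φ_self, zero_pow C.pos.ne']

theorem eventually_exists_preimage (C : PowerChart f x k) {A : Set X} (hA : A ∈ 𝓝 x) :
    ∀ᶠ y in 𝓝 (f x), y ∈ C.ψ.source ∧ ∀ w : ℂ, w ^ k = C.ψ y → ∃ a ∈ A, C.φ a = w ∧ f a = y := by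
  have hφA : C.φ '' (A ∩ C.φ.source) ∈ 𝓝 (0 : ℂ) := by
    rw [← C.φ_self, ← C.φ.map_nhds_eq C.mem_source]
    exact image_mem_map (inter_mem hA (C.φ.open_source.mem_nhds C.mem_source))
  obtain ⟨r, hr, hball⟩ := Metric.mem_nhds_iff.1 hφA
  have hψ : ∀ᶠ y in 𝓝 (f x), C.ψ y ∈ Metric.ball 0 (r ^ k) :=
    C.ψ.continuousAt C.map_self_mem_source <| by
      rw [C.ψ_map_self]; exact Metric.ball_mem_nhds _ (by positivity)
  filter_upwards [hψ, C.ψ.open_source.mem_nhds C.map_self_mem_source] with y hy hyψ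
  refine ⟨hyψ, fun w hw => ?_⟩
  have hwr : w ∈ Metric.ball 0 r := by
    rw [mem_ball_zero_iff, ← hw, norm_pow] at hy
    rw [mem_ball_zero_iff]
    exact (pow_lt_pow_iff_left₀ (norm_nonneg _) hr.le C.pos.ne').1 hy
  obtain ⟨a, ⟨haA, ha⟩, rfl⟩ := hball hwr
  exact ⟨a, haA, rfl, C.ψ.injOn (C.mapsTo ha) hyψ (by rw [C.ψ_map_eq_pow a ha, hw])⟩

theorem image_mem_nhds (C : PowerChart f x k) {A : Set X} (hA : A ∈ 𝓝 x) : f '' A ∈ 𝓝 (f x) := by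
  filter_upwards [C.eventually_exists_preimage hA] with y hy
  obtain ⟨-, hroots⟩ := hy
  obtain ⟨w, hw⟩ := IsAlgClosed.exists_pow_nat_eq (C.ψ y) C.pos
  obtain ⟨a, ha, -, hfa⟩ := hroots w hw
  exact ⟨a, ha, hfa⟩

theorem eventually_exists_ne_of_two_le (C : PowerChart f x k) (hk : 2 ≤ k) {A : Set X}
    (hA : A ∈ 𝓝 x) :
    ∀ᶠ y in 𝓝[≠] (f x), ∃ a ∈ A, ∃ b ∈ A, a ≠ b ∧ f a = y ∧ f b = y := by
  filter_upwards [nhdsWithin_le_nhds (C.eventually_exists_preimage hA), self_mem_nhdsWithin]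
    with y ⟨hyψ, hroots⟩ hy
  have hψy : C.ψ y ≠ 0 := fun h =>
    hy (C.ψ.injOn hyψ C.map_self_mem_source (h.trans C.ψ_map_self.symm))
  obtain ⟨w, w', hne, hw, hw'⟩ := Complex.exists_ne_pow_eq hk hψy
  obtain ⟨a, ha, rfl, hfa⟩ := hroots w hw
  obtain ⟨b, hb, rfl, hfb⟩ := hroots w' hw'
  exact ⟨a, ha, b, hb, fun h => hne (h ▸ rfl), hfa, hfb⟩

theorem exists_mem_nhds_injOn (C : PowerChart f x k) {z : X} (hz : z ∈ C.φ.source)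
    (hz0 : C.φ z ≠ 0) :
    ∃ U ∈ 𝓝 z, InjOn f U := by
  obtain ⟨N, hN, hinj⟩ := Complex.exists_mem_nhds_injOn_pow C.pos hz0
  refine ⟨C.φ.source ∩ C.φ ⁻¹' N,
    inter_mem (C.φ.open_source.mem_nhds hz) (C.φ.continuousAt hz hN), ?_⟩
  rintro a ⟨ha, haN⟩ b ⟨hb, hbN⟩ hab
  refine C.φ.injOn ha hb (hinj haN hbN ?_)
  simp only [← C.ψ_map_eq_pow a ha, ← C.ψ_map_eq_pow b hb, hab]

theorem injOn_source (C : PowerChart f x 1) : InjOn f C.φ.source := fun a ha b hb hab =>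
  C.φ.injOn ha hb <| by simpa [C.ψ_map_eq_pow a ha, C.ψ_map_eq_pow b hb] using congrArg C.ψ hab

end PowerChart

instance : ConnectedSpace Sph :=
  isConnected_iff_connectedSpace.1 <| isConnected_sphere
    (by rw [← Module.finrank_eq_rank, finrank_euclideanSpace_fin]; norm_num) 0 zero_le_one

instance : Nontrivial Sph := by
  obtain ⟨p, hp⟩ :=
    (NormedSpace.sphere_nonempty (x := (0 : EuclideanSpace ℝ (Fin 3)))).2 zero_le_one
  refine ⟨⟨p, hp⟩, ⟨-p, by simpa using hp⟩, fun h => ?_⟩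
  have h : p = -p := congrArg Subtype.val h
  rw [eq_neg_iff_add_eq_zero, ← two_smul ℝ, smul_eq_zero, or_iff_right two_ne_zero] at h
  simp [h] at hp

section Critical

variable {g : Sph → Sph}

theorem IsCriticalPt.not_injOn {x : Sph} (hx : IsCriticalPt g x) {U : Set Sph} (hU : U ∈ 𝓝 x) :
    ¬InjOn g U := by
  obtain ⟨k, hk, hram⟩ := hx
  obtain ⟨C⟩ := hram.nonempty_powerChart
  obtain ⟨_, a, ha, b, hb, hab, hga, hgb⟩ := (C.eventually_exists_ne_of_two_le hk hU).exists
  exact fun hinj => hab (hinj ha hb (hga.trans hgb.symm))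

namespace IsRamifiedCovering

theorem exists_isOpen_injOn (hg : IsRamifiedCovering g) {x : Sph} (hx : ¬IsCriticalPt g x) :
    ∃ U, IsOpen U ∧ x ∈ U ∧ InjOn g U := by
  obtain ⟨k, hram⟩ := hg.2 x
  obtain ⟨C⟩ := hram.nonempty_powerChart
  obtain rfl : k = 1 := by
    by_contra hk
    exact hx ⟨k, by have := C.pos; omega, hram⟩
  exact ⟨_, C.φ.open_source, C.mem_source, C.injOn_source⟩

theorem eventually_not_isCriticalPt (hg : IsRamifiedCovering g) (x : Sph) :
    ∀ᶠ z in 𝓝[≠] x, ¬IsCriticalPt g z := by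
  obtain ⟨k, hram⟩ := hg.2 x
  obtain ⟨C⟩ := hram.nonempty_powerChart
  filter_upwards [nhdsWithin_le_nhds (C.φ.open_source.mem_nhds C.mem_source),
    self_mem_nhdsWithin] with z hz hzx hcrit
  obtain ⟨U, hU, hinj⟩ := C.exists_mem_nhds_injOn hz fun h =>
    hzx (C.φ.injOn hz C.mem_source (h.trans C.φ_self.symm))
  exact hcrit.not_injOn hU hinj

theorem finite_setOf_isCriticalPt (hg : IsRamifiedCovering g) :
    {x | IsCriticalPt g x}.Finite := by
  obtain ⟨hclosed, hdiscrete⟩ := isClosed_and_discrete_iff.2 fun x =>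
    disjoint_principal_right.2 (hg.eventually_not_isCriticalPt x)
  exact hclosed.isCompact.finite hdiscrete

theorem frequently_not_isCriticalValue (hg : IsRamifiedCovering g) (y : Sph) :
    ∃ᶠ z in 𝓝[≠] y, ¬IsCriticalValue g z := by
  have hfin : {y | IsCriticalValue g y}.Finite := hg.finite_setOf_isCriticalPt.image g
  exact Filter.Eventually.frequently (disjoint_principal_right.1
    (isClosed_and_discrete_iff.1 ⟨hfin.isClosed, hfin.isDiscrete⟩ y))

end IsRamifiedCovering

end Critical

theorem Set.eq_or_eq_or_eq_of_natCard_eq_two {α : Type*} {s : Set α} (hs : Nat.card s = 2)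
    {a b c : α} (ha : a ∈ s) (hb : b ∈ s) (hc : c ∈ s) : a = b ∨ a = c ∨ b = c := by
  obtain ⟨x, y, -, rfl⟩ := Set.ncard_eq_two.1 (by rwa [← Nat.card_coe_set_eq])
  rcases ha with rfl | rfl <;> rcases hb with rfl | rfl <;> rcases hc with rfl | rfl <;> simp

section FiberPartner

variable {X Y : Type*} {g : X → Y}

open Classical in
def fiberPartner (g : X → Y) (x : X) : X := if h : ∃ y ≠ x, g y = g x then h.choose else x

theorem apply_fiberPartner (x : X) : g (fiberPartner g x) = g x := by
  unfold fiberPartner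
  split_ifs with h
  exacts [h.choose_spec.2, rfl]

theorem fiberPartner_eq_self_iff {x : X} : fiberPartner g x = x ↔ ∀ y, g y = g x → y = x := by
  unfold fiberPartner
  split_ifs with h
  · simp only [h.choose_spec.1, false_iff, not_forall]
    obtain ⟨y, hyx, hgy⟩ := h
    exact ⟨y, hgy, hyx⟩
  · push Not at h
    simpa using fun y hgy => by_contra fun hyx => h y hyx hgy

theorem eq_or_eq_fiberPartner (hfib : ∀ x y z : X, g y = g x → g z = g x → x = y ∨ x = z ∨ y = z)
    {x y : X} (hy : g y = g x) : y = x ∨ y = fiberPartner g x := by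
  by_cases hx : fiberPartner g x = x
  · exact Or.inl (fiberPartner_eq_self_iff.1 hx y hy)
  · rcases hfib x y (fiberPartner g x) hy (apply_fiberPartner x) with h | h | h
    exacts [Or.inl h.symm, absurd h.symm hx, Or.inr h]

theorem fiberPartner_involutive
    (hfib : ∀ x y z : X, g y = g x → g z = g x → x = y ∨ x = z ∨ y = z) :
    Function.Involutive (fiberPartner g) := by
  intro x
  obtain h | h := eq_or_eq_fiberPartner hfib
    ((apply_fiberPartner (fiberPartner g x)).trans (apply_fiberPartner x))
  · exact h
  · rw [h]
    exact (fiberPartner_eq_self_iff.1 h x (apply_fiberPartner x).symm).symm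

theorem continuous_fiberPartner [TopologicalSpace X] [CompactSpace X] [TopologicalSpace Y]
    [T2Space Y] (hg : Continuous g)
    (hfib : ∀ x y z : X, g y = g x → g z = g x → x = y ∨ x = z ∨ y = z)
    (hloc : ∀ x, fiberPartner g x ≠ x → ∃ U ∈ 𝓝 x, InjOn g U ∧ ∀ z ∈ U, fiberPartner g z ≠ z) :
    Continuous (fiberPartner g) := by
  refine continuous_iff_continuousAt.2 fun x => tendsto_nhds_of_unique_mapClusterPt fun z hz => ?_
  have hgz : g z = g x := by
    have h := hz.continuousAt_comp hg.continuousAt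
    rw [show g ∘ fiberPartner g = g from funext apply_fiberPartner] at h
    exact eq_of_nhds_neBot (h.clusterPt.mono hg.continuousAt)
  obtain rfl | h := eq_or_eq_fiberPartner hfib hgz
  · by_contra hne
    obtain ⟨U, hU, hinj, hfree⟩ := hloc z (Ne.symm hne)
    obtain ⟨a, hσa, haU⟩ := ((hz.frequently hU).and_eventually hU).exists
    exact hfree a haU (hinj hσa haU (apply_fiberPartner a))
  · exact h

end FiberPartner

namespace IsDegreeTwoRamifiedCovering

variable {g : Sph → Sph}

theorem eq_of_isCriticalPt (hg : IsDegreeTwoRamifiedCovering g) {c d : Sph}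
    (hc : IsCriticalPt g c) (hd : g d = g c) : d = c := by
  by_contra hdc
  -- A generic value near `g c` would have two preimages near `c` and a third one near `d`.
  obtain ⟨A, hA, B, hB, hAB⟩ := Filter.disjoint_iff.1 (disjoint_nhds_nhds.2 (Ne.symm hdc))
  obtain ⟨k, hk, hram⟩ := hc
  obtain ⟨C⟩ := hram.nonempty_powerChart
  obtain ⟨kd, hramd⟩ := hg.1.2 d
  obtain ⟨D⟩ := hramd.nonempty_powerChart
  have hBimg : g '' B ∈ 𝓝 (g c) := hd ▸ D.image_mem_nhds hB
  obtain ⟨y, hy, ⟨a, ha, a', ha', haa', hay, ha'y⟩, b, hb, hby⟩ :=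
    ((hg.1.frequently_not_isCriticalValue (g c)).and_eventually
      ((C.eventually_exists_ne_of_two_le hk hA).and (nhdsWithin_le_nhds hBimg))).exists
  rcases Set.eq_or_eq_or_eq_of_natCard_eq_two (hg.2 y hy) hay ha'y hby with h | h | h
  · exact haa' h
  · exact hAB.ne_of_mem ha hb h
  · exact hAB.ne_of_mem ha' hb h

theorem eq_or_eq_or_eq (hg : IsDegreeTwoRamifiedCovering g) (x y z : Sph) (hy : g y = g x)
    (hz : g z = g x) : x = y ∨ x = z ∨ y = z := by
  by_cases hx : IsCriticalValue g (g x)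
  · obtain ⟨c, hc, hcx⟩ := hx
    left
    rw [hg.eq_of_isCriticalPt hc (hy.trans hcx.symm), hg.eq_of_isCriticalPt hc hcx.symm]
  · exact Set.eq_or_eq_or_eq_of_natCard_eq_two (hg.2 _ hx) rfl hy hz

theorem fiberPartner_eq_self_iff_isCriticalPt (hg : IsDegreeTwoRamifiedCovering g) {x : Sph} :
    fiberPartner g x = x ↔ IsCriticalPt g x := by
  rw [fiberPartner_eq_self_iff]
  refine ⟨fun h => ?_, fun hx y hy => hg.eq_of_isCriticalPt hx hy⟩
  by_cases hv : IsCriticalValue g (g x)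
  · obtain ⟨c, hc, hcx⟩ := hv
    rwa [← h c hcx]
  · obtain ⟨a, b, hab, hfib⟩ :=
      Set.ncard_eq_two.1 (by rw [← Nat.card_coe_set_eq]; exact hg.2 _ hv)
    have ha : g a = g x := (hfib.symm ▸ Set.mem_insert a {b} : a ∈ g ⁻¹' {g x})
    have hb : g b = g x := (hfib.symm ▸ Set.mem_insert_of_mem a rfl : b ∈ g ⁻¹' {g x})
    exact absurd ((h a ha).trans (h b hb).symm) hab

theorem exists_mem_nhds_injOn_of_fiberPartner_ne (hg : IsDegreeTwoRamifiedCovering g) {x : Sph}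
    (hx : fiberPartner g x ≠ x) :
    ∃ U ∈ 𝓝 x, InjOn g U ∧ ∀ z ∈ U, fiberPartner g z ≠ z := by
  obtain ⟨U, hU, hxU, hinj⟩ :=
    hg.1.exists_isOpen_injOn (mt hg.fiberPartner_eq_self_iff_isCriticalPt.2 hx)
  exact ⟨U, hU.mem_nhds hxU, hinj, fun z hz hcz =>
    (hg.fiberPartner_eq_self_iff_isCriticalPt.1 hcz).not_injOn (hU.mem_nhds hz) hinj⟩

end IsDegreeTwoRamifiedCovering

/-- A degree-2 ramified covering `g : S² → S²` admits a nontrivial deck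
involution: a homeomorphism `M ≠ id` with `M ∘ M = id` and `g ∘ M = g`. -/
theorem exists_deck_involution (g : Sph → Sph) (hg : IsDegreeTwoRamifiedCovering g) :
    ∃ M : Sph ≃ₜ Sph, (∃ x, M x ≠ x) ∧ (∀ x, M (M x) = x) ∧ ∀ x, g (M x) = g x := by
  have hinv := fiberPartner_involutive hg.eq_or_eq_or_eq
  have hcont := continuous_fiberPartner hg.1.1 hg.eq_or_eq_or_eq
    fun _ => hg.exists_mem_nhds_injOn_of_fiberPartner_ne
  have : Infinite Sph := PreconnectedSpace.infinite
  obtain ⟨x, hx⟩ := hg.1.finite_setOf_isCriticalPt.infinite_compl.nonempty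
  exact ⟨⟨hinv.toPerm _, hcont, hcont⟩, ⟨x, mt hg.fiberPartner_eq_self_iff_isCriticalPt.1 hx⟩, hinv,
    apply_fiberPartner⟩
end
end
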